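/- Let H_A and H_C be Hilbert spaces, A a bounded self-adjoint operator on H_A, C a bounded self-adjoint operator on H_C, and B a bounded operator from H_C to H_A. Let H be the bounded self-adjoint block operator on H_A ⊕ H_C given by H(x ⊕ y) = (A x + B y) ⊕ (B* x + C y). Then a bounded operator X : H_A → H_C satisfies the Riccati equation X A - C X + X B X = B* if and only if the graph subspace G(X) = { x ⊕ X x : x ∈ H_A } is invariant under H and its orthogonal complement is also invariant under H (i.e., G(X) reduces H). -/

import Mathlib

/-!
Writing `D` for the lower-left entry of the block operator, `H` maps the graph vector
`x ⊕ X x` to `(A x + B X x) ⊕ (D x + C X x)`, which lies on the graph of `X` exactly when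
`X (A x + B X x) = D x + C X x`. So invariance of `G(X)` is the Riccati equation. Since
`H` is self-adjoint when `D = B*`, invariance of `G(X)ᗮ` then comes for free.
-/

open ContinuousLinearMap

theorem LinearMap.IsSymmetric.mapsTo_orthogonal {𝕜 E : Type*} [RCLike 𝕜] [NormedAddCommGroup E]
    [InnerProductSpace 𝕜 E] {T : E →ₗ[𝕜] E} (hT : T.IsSymmetric) {K : Submodule 𝕜 E}
    (hK : ∀ v ∈ K, T v ∈ K) : ∀ z ∈ Kᗮ, T z ∈ Kᗮ := by
  intro z hz
  rw [Submodule.mem_orthogonal] at hz ⊢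
  intro v hv
  rw [← hT]
  exact hz _ (hK v hv)

theorem graph_invariant_iff {𝕜 HA HC : Type*} [NormedField 𝕜]
    [NormedAddCommGroup HA] [NormedSpace 𝕜 HA] [NormedAddCommGroup HC] [NormedSpace 𝕜 HC]
    {A : HA →L[𝕜] HA} {B : HC →L[𝕜] HA} {C : HC →L[𝕜] HC} {D : HA →L[𝕜] HC}
    {H : WithLp 2 (HA × HC) →L[𝕜] WithLp 2 (HA × HC)}
    (hH : ∀ (x : HA) (y : HC), H (WithLp.toLp 2 (x, y)) = WithLp.toLp 2 (A x + B y, D x + C y))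
    {X : HA →L[𝕜] HC} {G : Submodule 𝕜 (WithLp 2 (HA × HC))}
    (hG : ∀ z, z ∈ G ↔ ∃ x : HA, z = WithLp.toLp 2 (x, X x)) :
    (∀ z ∈ G, H z ∈ G) ↔ X ∘L A + X ∘L B ∘L X = D + C ∘L X := by
  constructor
  · intro hGinv
    ext x
    obtain ⟨x', hx'⟩ := (hG _).mp (hGinv _ ((hG _).mpr ⟨x, rfl⟩))
    rw [hH, (WithLp.toLp_injective 2).eq_iff, Prod.mk.injEq] at hx'
    simp only [add_apply, comp_apply, ← map_add, hx'.1, hx'.2]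
  · intro hric z hz
    obtain ⟨x, rfl⟩ := (hG z).mp hz
    refine (hG _).mpr ⟨A x + B (X x), ?_⟩
    have hx : X (A x) + X (B (X x)) = D x + C (X x) := congr($hric x)
    rw [hH, map_add, hx]

theorem isSelfAdjoint_of_block {𝕜 HA HC : Type*} [RCLike 𝕜]
    [NormedAddCommGroup HA] [InnerProductSpace 𝕜 HA] [CompleteSpace HA]
    [NormedAddCommGroup HC] [InnerProductSpace 𝕜 HC] [CompleteSpace HC]
    {A : HA →L[𝕜] HA} (hA : IsSelfAdjoint A) {C : HC →L[𝕜] HC} (hC : IsSelfAdjoint C)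
    {B : HC →L[𝕜] HA} {H : WithLp 2 (HA × HC) →L[𝕜] WithLp 2 (HA × HC)}
    (hH : ∀ (x : HA) (y : HC),
      H (WithLp.toLp 2 (x, y)) = WithLp.toLp 2 (A x + B y, adjoint B x + C y)) :
    IsSelfAdjoint H := by
  rw [isSelfAdjoint_iff_isSymmetric]
  rintro ⟨x, y⟩ ⟨x', y'⟩
  have hAs := hA.isSymmetric x x'
  have hCs := hC.isSymmetric y y'
  simp only [coe_coe] at hAs hCs ⊢
  rw [hH, hH]
  simp only [WithLp.prod_inner_apply, inner_add_left, inner_add_right, adjoint_inner_left,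
    adjoint_inner_right, hAs, hCs]
  ring

theorem riccati_iff_graph_reduces
    {HA HC : Type*} [NormedAddCommGroup HA] [InnerProductSpace ℂ HA] [CompleteSpace HA]
    [NormedAddCommGroup HC] [InnerProductSpace ℂ HC] [CompleteSpace HC]
    (A : HA →L[ℂ] HA) (hA : IsSelfAdjoint A)
    (C : HC →L[ℂ] HC) (hC : IsSelfAdjoint C)
    (B : HC →L[ℂ] HA)
    (H : WithLp 2 (HA × HC) →L[ℂ] WithLp 2 (HA × HC))
    (hH : ∀ (x : HA) (y : HC),
      H ((WithLp.equiv 2 (HA × HC)).symm (x, y)) =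
        (WithLp.equiv 2 (HA × HC)).symm (A x + B y, ContinuousLinearMap.adjoint B x + C y))
    (X : HA →L[ℂ] HC)
    (G : Submodule ℂ (WithLp 2 (HA × HC)))
    (hG : ∀ z, z ∈ G ↔ ∃ x : HA, z = (WithLp.equiv 2 (HA × HC)).symm (x, X x)) :
    (X ∘L A - C ∘L X + X ∘L B ∘L X = ContinuousLinearMap.adjoint B) ↔
      ((∀ z ∈ G, H z ∈ G) ∧ (∀ z ∈ Gᗮ, H z ∈ Gᗮ)) := by
  rw [sub_add_eq_add_sub, sub_eq_iff_eq_add, ← graph_invariant_iff hH hG]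
  exact ⟨fun hinv => ⟨hinv, (isSelfAdjoint_of_block hA hC hH).isSymmetric.mapsTo_orthogonal hinv⟩,
    And.left⟩
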